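/- Let p = p(n) with p/n → y ∈ (0,∞), and take the symmetric Hankel link L(i,j) = i + j. For every set partition ω of {1,…,2k} with b blocks and r(ω) = r, the limit lim_{n→∞} |Π(ω)| / (p^{r+1}·n^{b−r}) exists, and it is strictly positive if and only if ω is a symmetric partition (every block of ω contains equally many odd integers as even integers); otherwise the limit equals 0. -/

import Mathlib

open MeasureTheory Filter Finset ProbabilityTheory Matrix
open scoped ENNReal NNReal Topology

namespace RMT

/-! ### Combinatorial notions: circuits, words (set partitions) -/

/-- A circuit of length `2k`: a map `π : {0,…,2k} → ℤ` (extended by `0` elsewhere) with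
`π 0 = π (2k)`, even positions in `{1,…,p}` and odd positions in `{1,…,n}`. -/
def IsCircuit (p n k : ℕ) (π : ℕ → ℤ) : Prop :=
  π 0 = π (2 * k) ∧
    (∀ i, i ≤ k → 1 ≤ π (2 * i) ∧ π (2 * i) ≤ (p : ℤ)) ∧
    (∀ i, 1 ≤ i → i ≤ k → 1 ≤ π (2 * i - 1) ∧ π (2 * i - 1) ≤ (n : ℤ)) ∧
    (∀ i, 2 * k < i → π i = 0)

/-- The entry index of a circuit at position `i`:
`(π (i-1), π i)` if `i` is odd, `(π i, π (i-1))` if `i` is even. -/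
def entryIdx (π : ℕ → ℤ) (i : ℕ) : ℤ × ℤ :=
  if Odd i then (π (i - 1), π i) else (π i, π (i - 1))

/-- The edge value of a circuit at position `i` for a link function `L`:
`ξ_π(2i−1) = L (π (2i−2)) (π (2i−1))` and `ξ_π(2i) = L (π (2i)) (π (2i−1))`. -/
def xiIdx (L : ℤ → ℤ → ℤ) (π : ℕ → ℤ) (i : ℕ) : ℤ :=
  if Odd i then L (π (i - 1)) (π i) else L (π i) (π (i - 1))

/-- `i` and `j` lie in the same block of the set partition `ω`. -/
def sameBlock {s : Finset ℕ} (ω : Finpartition s) (i j : ℕ) : Prop :=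
  ∃ B ∈ ω.parts, i ∈ B ∧ j ∈ B

/-- The class `Π_S(ω)` of circuits whose entry-index match structure is exactly `ω`. -/
def PiS (p n k : ℕ) (ω : Finpartition (Finset.Icc 1 (2 * k))) : Set (ℕ → ℤ) :=
  {π | IsCircuit p n k π ∧
    ∀ i ∈ Finset.Icc 1 (2 * k), ∀ j ∈ Finset.Icc 1 (2 * k),
      (sameBlock ω i j ↔ entryIdx π i = entryIdx π j)}

/-- The class `Π(ω)` of circuits, for a general link function `L`. -/
def PiL (L : ℤ → ℤ → ℤ) (p n k : ℕ) (ω : Finpartition (Finset.Icc 1 (2 * k))) : Set (ℕ → ℤ) :=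
  {π | IsCircuit p n k π ∧
    ∀ i ∈ Finset.Icc 1 (2 * k), ∀ j ∈ Finset.Icc 1 (2 * k),
      (sameBlock ω i j ↔ xiIdx L π i = xiIdx L π j)}

/-- `r(ω)`: the number of blocks of `ω` whose minimum element is even. -/
def rIdx {s : Finset ℕ} (ω : Finpartition s) : ℕ :=
  (ω.parts.filter fun B => Even (WithBot.unbotD 1 B.min)).card

/-- A partition is even if every block has even cardinality. -/
def EvenPartition {s : Finset ℕ} (ω : Finpartition s) : Prop :=
  ∀ B ∈ ω.parts, Even B.card

/-- A partition is symmetric if every block has equally many odd and even elements. -/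
def SymmetricPartition {s : Finset ℕ} (ω : Finpartition s) : Prop :=
  ∀ B ∈ ω.parts, (B.filter fun x => Odd x).card = (B.filter fun x => Even x).card

/-- A pair partition: every block has exactly two elements. -/
def PairPartition {s : Finset ℕ} (ω : Finpartition s) : Prop :=
  ∀ B ∈ ω.parts, B.card = 2

/-- Non-crossing partition. -/
def NonCrossing {s : Finset ℕ} (ω : Finpartition s) : Prop :=
  ¬ ∃ B ∈ ω.parts, ∃ B' ∈ ω.parts, B ≠ B' ∧
      ∃ a ∈ B, ∃ c ∈ B, ∃ b ∈ B', ∃ d ∈ B', a < b ∧ b < c ∧ c < d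

/-- Special symmetric partition: every block has even size, and between any two
successive elements of a block, every other block has an even number of elements,
equally many of them at odd and even positions. -/
def SpecialSymmetric {s : Finset ℕ} (ω : Finpartition s) : Prop :=
  (∀ B ∈ ω.parts, Even B.card) ∧
    ∀ B ∈ ω.parts, ∀ i ∈ B, ∀ j ∈ B, i < j → (∀ x ∈ B, ¬(i < x ∧ x < j)) →
      ∀ B' ∈ ω.parts, B' ≠ B →
        Even (B' ∩ Finset.Ioo i j).card ∧
          ((B' ∩ Finset.Ioo i j).filter fun x => Odd x).card =
            ((B' ∩ Finset.Ioo i j).filter fun x => Even x).card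

/-! ### Spectral notions -/

/-- The empirical spectral distribution of the covariance matrix `A * Aᴴ` of a real
`p × n` matrix `A`: the uniform probability measure on its eigenvalues. -/
noncomputable def esdCov {p n : ℕ} (A : Matrix (Fin p) (Fin n) ℝ) : Measure ℝ :=
  (p : ℝ≥0∞)⁻¹ • ∑ i : Fin p,
    Measure.dirac ((Matrix.isHermitian_mul_conjTranspose_self A).eigenvalues i)

/-- Weak convergence of a sequence of measures on `ℝ` to `μ`. -/
def WeakLim (μs : ℕ → Measure ℝ) (μ : Measure ℝ) : Prop :=
  ∀ f : BoundedContinuousFunction ℝ ℝ,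
    Tendsto (fun n => ∫ v, f v ∂(μs n)) atTop (𝓝 (∫ v, f v ∂μ))

/-- Expected empirical spectral distribution of the random covariance matrix `A·Aᵀ`. -/
noncomputable def eesd {Ω : Type*} [MeasurableSpace Ω] (P : Measure Ω) {p n : ℕ}
    (A : Ω → Matrix (Fin p) (Fin n) ℝ) : Measure ℝ :=
  P.bind fun ω => esdCov (A ω)

/-- Truncation at level `t`: `v·1[|v| ≤ t]`. -/
noncomputable def trunc (t : ℝ≥0∞) (v : ℝ) : ℝ :=
  if ENNReal.ofReal |v| ≤ t then v else 0

/-- The above-threshold part: `v·1[|v| > t]`. -/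
noncomputable def truncAbove (t : ℝ≥0∞) (v : ℝ) : ℝ :=
  if ENNReal.ofReal |v| ≤ t then 0 else v

/-- The Lévy distance between two "distribution functions". -/
noncomputable def levyDist (F G : ℝ → ℝ) : ℝ :=
  sInf {ε : ℝ | 0 < ε ∧ ∀ x : ℝ, F (x - ε) - ε ≤ G x ∧ G x ≤ F (x + ε) + ε}

/-- The cumulative distribution function of a measure on `ℝ`. -/
noncomputable def cdf (μ : Measure ℝ) : ℝ → ℝ := fun v => (μ (Set.Iic v)).toReal

/-! ### Assumption A -/

/-- `M_{2k} = sup_{[0,1]²} |g_{2k}|`, `M_{odd} = 0`, for a two-variable kernel family. -/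
noncomputable def Msup2 (glim : ℕ → ℝ → ℝ → ℝ) (j : ℕ) : ℝ :=
  if Even j then
    sSup ((fun z : ℝ × ℝ => |glim (j / 2) z.1 z.2|) '' (Set.Icc (0 : ℝ) 1 ×ˢ Set.Icc (0 : ℝ) 1))
  else 0

/-- `α_m = Σ_{σ ∈ P(m)} ∏_{V ∈ σ} M_{|V|}` (sum over all set partitions of `{1,…,m}`). -/
noncomputable def alphaP (M : ℕ → ℝ) (m : ℕ) : ℝ :=
  ∑ σ : Finpartition (Finset.Icc 1 m), ∏ B ∈ σ.parts, M B.card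

/-- Carleman's condition `Σ_{k ≥ 1} α_{2k}^{-1/(2k)} = ∞`, where `α_k = alphaP M (2k)`. -/
def Carleman (M : ℕ → ℝ) : Prop :=
  ¬ Summable fun k : ℕ =>
      alphaP M (2 * (2 * (k + 1))) ^ (-(1 : ℝ) / (2 * (k + 1) : ℝ))

/-- Assumption A of Bose–Sen for the matrix `X_n = (x_{ij,n})` with thresholds `t n`,
kernels `g k n` (representing `g_{2k,n}`) and limits `glim k` (representing `g_{2k}`). -/
structure AssumptionA {Ω : Type*} [MeasurableSpace Ω] (P : Measure Ω)
    (p : ℕ → ℕ) (y : ℝ) (x : (n : ℕ) → Fin (p n) → Fin n → Ω → ℝ)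
    (t : ℕ → ℝ≥0∞) (g : ℕ → ℕ → ℝ → ℝ → ℝ) (glim : ℕ → ℝ → ℝ → ℝ) : Prop where
  hprob : IsProbabilityMeasure P
  hy : 0 < y
  hp_lim : Tendsto (fun n => (p n : ℝ) / n) atTop (𝓝 y)
  hp_top : Tendsto p atTop atTop
  hmeas : ∀ n i j, Measurable (x n i j)
  hindep : ∀ n, iIndepFun
      (fun ij : Fin (p n) × Fin n => x n ij.1 ij.2) P
  ht_pos : ∀ n, 0 < t n
  hg_eq : ∀ k, 1 ≤ k → ∀ n, ∀ i : Fin (p n), ∀ j : Fin n,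
    (n : ℝ) * ∫ ω, trunc (t n) (x n i j ω) ^ (2 * k) ∂P =
      g k n ((i.1 + 1 : ℝ) / (p n)) ((j.1 + 1 : ℝ) / n)
  hg_odd : ∀ k, 1 ≤ k → ∀ α : ℝ, α < 1 →
    Tendsto (fun n : ℕ => (n : ℝ) ^ α *
        ⨆ i : Fin (p n), ⨆ j : Fin n,
          |∫ ω, trunc (t n) (x n i j ω) ^ (2 * k - 1) ∂P|) atTop (𝓝 0)
  hg_bdd : ∀ k n, 1 ≤ k → ∃ C : ℝ,
    ∀ z ∈ Set.Icc (0 : ℝ) 1 ×ˢ Set.Icc (0 : ℝ) 1, |g k n z.1 z.2| ≤ C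
  hg_riemann : ∀ k n, 1 ≤ k →
    ∀ᵐ z ∂(volume.restrict (Set.Icc (0 : ℝ) 1 ×ˢ Set.Icc (0 : ℝ) 1)),
      ContinuousAt (fun z : ℝ × ℝ => g k n z.1 z.2) z
  hg_unif : ∀ k, 1 ≤ k →
    TendstoUniformlyOn (fun n z => g k n z.1 z.2) (fun z : ℝ × ℝ => glim k z.1 z.2)
      atTop (Set.Icc (0 : ℝ) 1 ×ˢ Set.Icc (0 : ℝ) 1)
  hCarleman : Carleman (Msup2 glim)

/-- The truncated matrix `Z_n` with entries `y_{ij} = x_{ij}·1[|x_{ij}| ≤ t_n]`. -/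
noncomputable def Zmat {Ω : Type*} (p : ℕ → ℕ) (x : (n : ℕ) → Fin (p n) → Fin n → Ω → ℝ)
    (t : ℕ → ℝ≥0∞) (n : ℕ) (ω : Ω) : Matrix (Fin (p n)) (Fin n) ℝ :=
  Matrix.of fun i j => trunc (t n) (x n i j ω)

/-- The matrix `X_n` with entries `x_{ij,n}`. -/
def Xmat {Ω : Type*} (p : ℕ → ℕ) (x : (n : ℕ) → Fin (p n) → Fin n → Ω → ℝ)
    (n : ℕ) (ω : Ω) : Matrix (Fin (p n)) (Fin n) ℝ :=
  Matrix.of fun i j => x n i j ω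

end RMT

namespace RMT

section Statement15Aux

variable {k : ℕ} (ω : Finpartition (Finset.Icc 1 (2 * k)))

/-- The blocks of `ω` as a subtype. -/
abbrev Blk := {B : Finset ℕ // B ∈ ω.parts}

/-- Index type for the parametrization of circuits: `none` is the initial vertex,
`some B` is the common edge-value of block `B`. -/
abbrev Idx := Option (Blk ω)

section Ring

variable {R : Type*} [CommRing R]

/-- The edge value at position `j` read off from a coordinate vector `z`. -/
noncomputable def zv (z : Idx ω → R) (j : ℕ) : R :=
  if h : j ∈ Finset.Icc 1 (2 * k) then z (some ⟨ω.part j, ω.part_mem.2 h⟩) else 0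

/-- The vertex value at position `i` determined by a coordinate vector `z`. -/
noncomputable def piF (z : Idx ω → R) (i : ℕ) : R :=
  (-1) ^ i * z none + ∑ j ∈ Finset.Icc 1 i, (-1) ^ (i + j) * zv ω z j

lemma piF_zero (z : Idx ω → R) : piF ω z 0 = z none := by
  simp [piF]

lemma zv_pos (z : Idx ω → R) {j : ℕ} (h : j ∈ Finset.Icc 1 (2 * k)) :
    zv ω z j = z (some ⟨ω.part j, ω.part_mem.2 h⟩) := dif_pos h

lemma piF_add_succ (z : Idx ω → R) (m : ℕ) :
    piF ω z m + piF ω z (m + 1) = zv ω z (m + 1) := by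
  unfold piF
  rw [Finset.sum_Icc_succ_top (by omega : 1 ≤ m + 1)]
  have h2 : ((-1 : R)) ^ (m + 1 + (m + 1)) = 1 := by
    rw [show m + 1 + (m + 1) = 2 * (m + 1) by ring, pow_mul]; norm_num
  have h1 : ∑ j ∈ Finset.Icc 1 m, (-1 : R) ^ (m + 1 + j) * zv ω z j
      = -∑ j ∈ Finset.Icc 1 m, (-1 : R) ^ (m + j) * zv ω z j := by
    rw [← Finset.sum_neg_distrib]
    refine Finset.sum_congr rfl fun j _ => ?_
    rw [show m + 1 + j = (m + j) + 1 by ring, pow_succ]; ring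
  rw [h1, h2, pow_succ]
  ring

lemma piF_last (z : Idx ω → R) :
    piF ω z (2 * k) = z none + ∑ j ∈ Finset.Icc 1 (2 * k), (-1 : R) ^ j * zv ω z j := by
  unfold piF
  have h0 : ((-1 : R)) ^ (2 * k) = 1 := by rw [pow_mul]; norm_num
  rw [h0, one_mul]
  congr 1
  refine Finset.sum_congr rfl fun j _ => ?_
  rw [pow_add, h0, one_mul]

lemma sum_sign (i : ℕ) :
    ∑ j ∈ Finset.Icc 1 i, (-1 : R) ^ (i + j) = if Even i then 0 else 1 := by
  induction i with
  | zero => simp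
  | succ m ih =>
    rw [Finset.sum_Icc_succ_top (by omega : 1 ≤ m + 1)]
    have h2 : ((-1 : R)) ^ (m + 1 + (m + 1)) = 1 := by
      rw [show m + 1 + (m + 1) = 2 * (m + 1) by ring, pow_mul]; norm_num
    have h1 : ∑ j ∈ Finset.Icc 1 m, (-1 : R) ^ (m + 1 + j)
        = -∑ j ∈ Finset.Icc 1 m, (-1 : R) ^ (m + j) := by
      rw [← Finset.sum_neg_distrib]
      refine Finset.sum_congr rfl fun j _ => ?_
      rw [show m + 1 + j = (m + j) + 1 by ring, pow_succ]; ring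
    rw [h1, h2, ih]
    by_cases h : Even m
    · simp [h, Nat.even_add_one]
    · simp [h, Nat.even_add_one]

lemma zv_sub (a b : Idx ω → R) (j : ℕ) :
    zv ω (a - b) j = zv ω a j - zv ω b j := by
  unfold zv; split <;> simp

lemma zv_add (a b : Idx ω → R) (j : ℕ) :
    zv ω (a + b) j = zv ω a j + zv ω b j := by
  unfold zv; split <;> simp

lemma zv_smul (c : R) (a : Idx ω → R) (j : ℕ) :
    zv ω (fun t => c * a t) j = c * zv ω a j := by
  unfold zv; split <;> simp

lemma piF_sub (a b : Idx ω → R) (i : ℕ) :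
    piF ω (a - b) i = piF ω a i - piF ω b i := by
  unfold piF
  simp only [zv_sub, Pi.sub_apply, mul_sub, Finset.sum_sub_distrib]
  ring

lemma piF_add (a b : Idx ω → R) (i : ℕ) :
    piF ω (a + b) i = piF ω a i + piF ω b i := by
  unfold piF
  simp only [zv_add, Pi.add_apply, mul_add, Finset.sum_add_distrib]
  ring

lemma piF_smul (c : R) (a : Idx ω → R) (i : ℕ) :
    piF ω (fun t => c * a t) i = c * piF ω a i := by
  unfold piF
  simp only [zv_smul, Finset.mul_sum, mul_add]
  ring_nf

end Ring

lemma piF_cast (z : Idx ω → ℤ) (i : ℕ) :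
    ((piF ω z i : ℤ) : ℝ) = piF ω (fun t => (z t : ℝ)) i := by
  unfold piF
  push_cast
  congr 1
  refine Finset.sum_congr rfl fun j _ => ?_
  congr 1
  unfold zv; split <;> simp

lemma abs_piF_le (M : ℝ) (v : Idx ω → ℝ) (hv : ∀ t, |v t| ≤ M) (i : ℕ) :
    |piF ω v i| ≤ (1 + i) * M := by
  have hM : 0 ≤ M := le_trans (abs_nonneg _) (hv none)
  have hzv : ∀ j, |zv ω v j| ≤ M := by
    intro j; unfold zv; split
    · exact hv _
    · simpa using hM
  calc |piF ω v i| ≤ |(-1 : ℝ) ^ i * v none| +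
        |∑ j ∈ Finset.Icc 1 i, (-1 : ℝ) ^ (i + j) * zv ω v j| := abs_add_le _ _
    _ ≤ M + i * M := by
        refine add_le_add ?_ ?_
        · rw [abs_mul, abs_pow, abs_neg, abs_one, one_pow, one_mul]; exact hv none
        · refine le_trans (Finset.abs_sum_le_sum_abs _ _) ?_
          have : ∀ j ∈ Finset.Icc 1 i, |(-1 : ℝ) ^ (i + j) * zv ω v j| ≤ M := by
            intro j _
            rw [abs_mul, abs_pow, abs_neg, abs_one, one_pow, one_mul]; exact hzv j
          refine le_trans (Finset.sum_le_sum this) ?_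
          rw [Finset.sum_const, Nat.card_Icc]
          simp only [nsmul_eq_mul]
          have : ((i + 1 - 1 : ℕ) : ℝ) ≤ (i : ℕ) := by norm_num
          nlinarith [hM]
    _ = (1 + i) * M := by ring

lemma piF_floor_est (w : Idx ω → ℝ) (n : ℕ) (i : ℕ) :
    |((piF ω (fun t => ⌊(n : ℝ) * w t⌋) i : ℤ) : ℝ) - (n : ℝ) * piF ω w i| ≤ 1 + i := by
  have h1 : (n : ℝ) * piF ω w i = piF ω (fun t => (n : ℝ) * w t) i := (piF_smul ω _ _ _).symm
  rw [piF_cast, h1, ← piF_sub]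
  have := abs_piF_le ω 1 ((fun t => ((⌊(n : ℝ) * w t⌋ : ℤ) : ℝ)) - fun t => (n : ℝ) * w t)
    (fun t => ?_) i
  · simpa using this
  · simp only [Pi.sub_apply]
    rw [abs_le]
    constructor
    · have := Int.lt_floor_add_one ((n : ℝ) * w t); linarith
    · have := Int.floor_le ((n : ℝ) * w t); linarith

end Statement15Aux
section Statement15Aux2

variable {k : ℕ} (ω : Finpartition (Finset.Icc 1 (2 * k)))

lemma neg_one_sum {R : Type*} [CommRing R] (B : Finset ℕ) :
    ∑ j ∈ B, (-1 : R) ^ j =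
      ((B.filter fun x => Even x).card : R) - ((B.filter fun x => Odd x).card : R) := by
  classical
  rw [← Finset.sum_filter_add_sum_filter_not B (fun x => Even x)]
  have h1 : ∑ j ∈ B.filter (fun x => Even x), (-1 : R) ^ j
      = ((B.filter fun x => Even x).card : R) := by
    rw [Finset.sum_congr rfl (fun j hj => (Finset.mem_filter.1 hj).2.neg_one_pow)]
    simp
  have h2 : ∑ j ∈ B.filter (fun x => ¬Even x), (-1 : R) ^ j
      = -((B.filter fun x => Odd x).card : R) := by
    have he : B.filter (fun x => ¬Even x) = B.filter (fun x => Odd x) :=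
      Finset.filter_congr fun x _ => Nat.not_even_iff_odd
    rw [he, Finset.sum_congr rfl (fun j hj => (Finset.mem_filter.1 hj).2.neg_one_pow)]
    simp
  rw [h1, h2]; ring

lemma sum_blocks {R : Type*} [CommRing R] (z : Idx ω → R) :
    ∑ j ∈ Finset.Icc 1 (2 * k), (-1 : R) ^ j * zv ω z j
      = ∑ B ∈ ω.parts.attach, (∑ j ∈ B.1, (-1 : R) ^ j) * z (some ⟨B.1, B.2⟩) := by
  classical
  have hdis : (↑ω.parts : Set (Finset ℕ)).PairwiseDisjoint id := ω.supIndep.pairwiseDisjoint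
  have hrw : ∑ j ∈ Finset.Icc 1 (2 * k), (-1 : R) ^ j * zv ω z j
      = ∑ B ∈ ω.parts, ∑ j ∈ id B, (-1 : R) ^ j * zv ω z j := by
    rw [show (∑ j ∈ Finset.Icc 1 (2 * k), (-1 : R) ^ j * zv ω z j)
        = ∑ j ∈ ω.parts.biUnion id, (-1 : R) ^ j * zv ω z j by rw [ω.biUnion_parts]]
    exact Finset.sum_biUnion hdis
  simp only [id] at hrw
  rw [hrw, ← Finset.sum_attach ω.parts (fun B => ∑ j ∈ B, (-1 : R) ^ j * zv ω z j)]
  refine Finset.sum_congr rfl fun B _ => ?_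
  rw [Finset.sum_mul]
  refine Finset.sum_congr rfl fun j hj => ?_
  have hjI : j ∈ Finset.Icc 1 (2 * k) := ω.le B.2 hj
  rw [zv_pos ω z hjI]
  have hsub : (⟨ω.part j, ω.part_mem.2 hjI⟩ : Blk ω) = ⟨B.1, B.2⟩ :=
    Subtype.ext (ω.part_eq_of_mem B.2 hj)
  rw [hsub]

lemma closure_sum {R : Type*} [CommRing R] (z : Idx ω → R)
    (h : piF ω z 0 = piF ω z (2 * k)) :
    ∑ B ∈ ω.parts.attach, (∑ j ∈ B.1, (-1 : R) ^ j) * z (some ⟨B.1, B.2⟩) = 0 := by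
  rw [piF_zero, piF_last] at h
  rw [← sum_blocks]
  linear_combination -h

lemma closure_of_symmetric {R : Type*} [CommRing R] (hsym : SymmetricPartition ω)
    (z : Idx ω → R) : piF ω z 0 = piF ω z (2 * k) := by
  rw [piF_zero, piF_last, sum_blocks]
  have h0 : ∀ B ∈ ω.parts.attach, (∑ j ∈ B.1, (-1 : R) ^ j) * z (some ⟨B.1, B.2⟩) = 0 := by
    intro B _
    rw [neg_one_sum, ← hsym B.1 B.2, sub_self, zero_mul]
  rw [Finset.sum_eq_zero h0, add_zero]

/-- The lattice-point description of `Π(ω)` for the Hankel link. -/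
def SZ (p n : ℕ) : Set (Idx ω → ℤ) :=
  {z | piF ω z 0 = piF ω z (2 * k) ∧
    (∀ i ≤ 2 * k, 1 ≤ piF ω z i ∧ piF ω z i ≤ (if Even i then (p : ℤ) else (n : ℤ))) ∧
    ∀ B B' : Blk ω, B ≠ B' → z (some B) ≠ z (some B')}

/-- Reconstructing a circuit from a coordinate vector. -/
noncomputable def Phi (z : Idx ω → ℤ) : ℕ → ℤ := fun i => if i ≤ 2 * k then piF ω z i else 0

lemma xiIdx_add' (π : ℕ → ℤ) (i : ℕ) : xiIdx (fun a b => a + b) π i = π (i - 1) + π i := by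
  unfold xiIdx; split
  · rfl
  · exact add_comm _ _

lemma sameBlock_iff {i j : ℕ} (hi : i ∈ Finset.Icc 1 (2 * k)) (hj : j ∈ Finset.Icc 1 (2 * k)) :
    sameBlock ω i j ↔ ω.part i = ω.part j := by
  constructor
  · rintro ⟨B, hB, hiB, hjB⟩
    rw [ω.part_eq_of_mem hB hiB, ω.part_eq_of_mem hB hjB]
  · intro h
    exact ⟨ω.part i, ω.part_mem.2 hi, ω.mem_part hi, by rw [h]; exact ω.mem_part hj⟩

lemma Phi_mem_PiL {p n : ℕ} {z : Idx ω → ℤ} (hz : z ∈ SZ ω p n) :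
    Phi ω z ∈ PiL (fun a b => a + b) p n k ω := by
  obtain ⟨hcl, hbd, hdist⟩ := hz
  have hxi : ∀ i ∈ Finset.Icc 1 (2 * k),
      xiIdx (fun a b => a + b) (Phi ω z) i = zv ω z i := by
    intro i hi
    rw [Finset.mem_Icc] at hi
    rw [xiIdx_add']
    have h1 : Phi ω z (i - 1) = piF ω z (i - 1) := if_pos (by omega)
    have h2 : Phi ω z i = piF ω z i := if_pos hi.2
    rw [h1, h2]
    have h3 := piF_add_succ ω z (i - 1)
    rwa [show i - 1 + 1 = i by omega] at h3
  refine ⟨⟨?_, ?_, ?_, ?_⟩, ?_⟩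
  · show Phi ω z 0 = Phi ω z (2 * k)
    have h1 : Phi ω z 0 = piF ω z 0 := if_pos (by omega)
    have h2 : Phi ω z (2 * k) = piF ω z (2 * k) := if_pos (le_refl _)
    rw [h1, h2]; exact hcl
  · intro i hik
    have h2 : Phi ω z (2 * i) = piF ω z (2 * i) := if_pos (by omega)
    rw [h2]
    have hb := hbd (2 * i) (by omega)
    rwa [if_pos ⟨i, by ring⟩] at hb
  · intro i h1i hik
    have h2 : Phi ω z (2 * i - 1) = piF ω z (2 * i - 1) := if_pos (by omega)
    rw [h2]
    have hb := hbd (2 * i - 1) (by omega)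
    rwa [if_neg (by rw [Nat.even_iff]; omega)] at hb
  · intro i hi
    exact if_neg (by omega)
  · intro i hi j hj
    rw [hxi i hi, hxi j hj, zv_pos ω z hi, zv_pos ω z hj, sameBlock_iff ω hi hj]
    constructor
    · intro h
      have hsub : (⟨ω.part i, ω.part_mem.2 hi⟩ : Blk ω) = ⟨ω.part j, ω.part_mem.2 hj⟩ :=
        Subtype.ext h
      rw [hsub]
    · intro h
      by_contra hne
      exact hdist _ _ (fun he => hne (congrArg Subtype.val he)) h

lemma Phi_injOn {p n : ℕ} : Set.InjOn (Phi ω) (SZ ω p n) := by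
  intro z _ z' _ he
  have key : ∀ w : Idx ω → ℤ, ∀ B : Blk ω,
      w (some B) = Phi ω w (B.1.min' (ω.nonempty_of_mem_parts B.2) - 1)
        + Phi ω w (B.1.min' (ω.nonempty_of_mem_parts B.2)) := by
    intro w B
    have hne := ω.nonempty_of_mem_parts B.2
    have hmI : B.1.min' hne ∈ Finset.Icc 1 (2 * k) := ω.le B.2 (B.1.min'_mem hne)
    have hm12 := Finset.mem_Icc.1 hmI
    have h1 : Phi ω w (B.1.min' hne - 1) = piF ω w (B.1.min' hne - 1) := if_pos (by omega)
    have h2 : Phi ω w (B.1.min' hne) = piF ω w (B.1.min' hne) := if_pos (by omega)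
    rw [h1, h2]
    have h3 := piF_add_succ ω w (B.1.min' hne - 1)
    rw [show B.1.min' hne - 1 + 1 = B.1.min' hne by omega] at h3
    rw [h3, zv_pos ω w hmI]
    have hsub : (⟨ω.part (B.1.min' hne), ω.part_mem.2 hmI⟩ : Blk ω) = B :=
      Subtype.ext (ω.part_eq_of_mem B.2 (B.1.min'_mem hne))
    rw [hsub]
  funext t
  match t with
  | none =>
    have h0 := congrFun he 0
    simp only [Phi, if_pos (show (0:ℕ) ≤ 2 * k by omega)] at h0
    rwa [piF_zero, piF_zero] at h0
  | some B =>
    rw [key z B, key z' B, he]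

/-- Reading off the coordinate vector of a circuit. -/
noncomputable def Psi (π : ℕ → ℤ) : Idx ω → ℤ := fun t =>
  match t with
  | none => π 0
  | some B => π (B.1.min' (ω.nonempty_of_mem_parts B.2) - 1)
      + π (B.1.min' (ω.nonempty_of_mem_parts B.2))

lemma Phi_surjOn {p n : ℕ} :
    Set.SurjOn (Phi ω) (SZ ω p n) (PiL (fun a b => a + b) p n k ω) := by
  rintro π ⟨⟨hc1, hc2, hc3, hc4⟩, hX⟩
  have minmem : ∀ B : Blk ω, B.1.min' (ω.nonempty_of_mem_parts B.2) ∈ Finset.Icc 1 (2 * k) :=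
    fun B => ω.le B.2 (B.1.min'_mem _)
  have hval : ∀ i, ∀ hi : i ∈ Finset.Icc 1 (2 * k),
      Psi ω π (some ⟨ω.part i, ω.part_mem.2 hi⟩) = π (i - 1) + π i := by
    intro i hi
    set B : Blk ω := ⟨ω.part i, ω.part_mem.2 hi⟩ with hB
    set m := B.1.min' (ω.nonempty_of_mem_parts B.2) with hm
    have hmi : m ∈ Finset.Icc 1 (2 * k) := minmem B
    have hsb : sameBlock ω i m := ⟨ω.part i, ω.part_mem.2 hi, ω.mem_part hi, B.1.min'_mem _⟩
    have hxi := (hX i hi m hmi).1 hsb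
    rw [xiIdx_add', xiIdx_add'] at hxi
    have : Psi ω π (some B) = π (m - 1) + π m := rfl
    rw [this, ← hxi]
  have hPsi_piF : ∀ i, i ≤ 2 * k → piF ω (Psi ω π) i = π i := by
    intro i
    induction i with
    | zero => intro _; rw [piF_zero]; rfl
    | succ m ih =>
      intro hm
      have h1 := piF_add_succ ω (Psi ω π) m
      have hmem : m + 1 ∈ Finset.Icc 1 (2 * k) := by rw [Finset.mem_Icc]; omega
      have h2 : zv ω (Psi ω π) (m + 1) = π m + π (m + 1) := by
        rw [zv_pos ω _ hmem, hval (m + 1) hmem]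
        norm_num
      rw [ih (by omega), h2] at h1
      omega
  refine ⟨Psi ω π, ⟨?_, ?_, ?_⟩, ?_⟩
  · rw [hPsi_piF 0 (by omega), hPsi_piF (2 * k) (le_refl _)]
    exact hc1
  · intro i hi
    rw [hPsi_piF i hi]
    by_cases he : Even i
    · rw [if_pos he]
      obtain ⟨m, hm⟩ := he
      have hb := hc2 m (by omega)
      rwa [show 2 * m = i by omega] at hb
    · rw [if_neg he]
      have hodd : i % 2 = 1 := Nat.not_even_iff.1 he
      have hb := hc3 ((i + 1) / 2) (by omega) (by omega)
      rwa [show 2 * ((i + 1) / 2) - 1 = i by omega] at hb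
  · intro B B' hne heq
    have hmI := minmem B
    have hm'I := minmem B'
    have hxi : xiIdx (fun a b => a + b) π (B.1.min' (ω.nonempty_of_mem_parts B.2))
        = xiIdx (fun a b => a + b) π (B'.1.min' (ω.nonempty_of_mem_parts B'.2)) := by
      rw [xiIdx_add', xiIdx_add']
      exact heq
    obtain ⟨C, hC, hmC, hm'C⟩ := (hX _ hmI _ hm'I).2 hxi
    have h1 : B.1 = C := ω.eq_of_mem_parts B.2 hC (B.1.min'_mem _) hmC
    have h2 : B'.1 = C := ω.eq_of_mem_parts B'.2 hC (B'.1.min'_mem _) hm'C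
    exact hne (Subtype.ext (h1.trans h2.symm))
  · funext i
    by_cases hik : i ≤ 2 * k
    · show (if i ≤ 2 * k then piF ω (Psi ω π) i else 0) = π i
      rw [if_pos hik, hPsi_piF i hik]
    · show (if i ≤ 2 * k then piF ω (Psi ω π) i else 0) = π i
      rw [if_neg hik, hc4 i (by omega)]

lemma bijOn_SZ (p n : ℕ) :
    Set.BijOn (Phi ω) (SZ ω p n) (PiL (fun a b => a + b) p n k ω) :=
  ⟨fun _ hz => Phi_mem_PiL ω hz, Phi_injOn ω, Phi_surjOn ω⟩

lemma ncard_PiL_eq (p n : ℕ) :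
    (PiL (fun a b => a + b) p n k ω).ncard = (SZ ω p n).ncard := by
  rw [← (bijOn_SZ ω p n).image_eq, Set.ncard_image_of_injOn (Phi_injOn ω)]

lemma SZ_bounds {p n : ℕ} {z : Idx ω → ℤ} (hz : z ∈ SZ ω p n) (t : Idx ω) :
    0 ≤ z t ∧ z t ≤ 2 * ((p : ℤ) + n) := by
  obtain ⟨_, hbd, _⟩ := hz
  have hb : ∀ i, i ≤ 2 * k → 1 ≤ piF ω z i ∧ piF ω z i ≤ (p : ℤ) + n := by
    intro i hi
    obtain ⟨h1, h2⟩ := hbd i hi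
    refine ⟨h1, le_trans h2 ?_⟩
    split <;> omega
  match t with
  | none =>
    have h0 := hb 0 (by omega)
    rw [piF_zero] at h0
    omega
  | some B =>
    have hne := ω.nonempty_of_mem_parts B.2
    have hmI : B.1.min' hne ∈ Finset.Icc 1 (2 * k) := ω.le B.2 (B.1.min'_mem hne)
    have hm12 := Finset.mem_Icc.1 hmI
    have h3 := piF_add_succ ω z (B.1.min' hne - 1)
    rw [show B.1.min' hne - 1 + 1 = B.1.min' hne by omega] at h3
    have hz1 := hb (B.1.min' hne - 1) (by omega)
    have hz2 := hb (B.1.min' hne) (by omega)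
    have hzv : zv ω z (B.1.min' hne) = z (some B) := by
      rw [zv_pos ω z hmI]
      have hsub : (⟨ω.part (B.1.min' hne), ω.part_mem.2 hmI⟩ : Blk ω) = B :=
        Subtype.ext (ω.part_eq_of_mem B.2 (B.1.min'_mem hne))
      rw [hsub]
    rw [hzv] at h3
    omega

lemma SZ_finite (p n : ℕ) : (SZ ω p n).Finite := by
  classical
  refine Set.Finite.subset
    (Finset.finite_toSet (Fintype.piFinset fun _ : Idx ω => Finset.Icc (0 : ℤ) (2 * ((p : ℤ) + n))))
    ?_
  intro z hz
  rw [Finset.mem_coe, Fintype.mem_piFinset]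
  intro t
  rw [Finset.mem_Icc]
  exact SZ_bounds ω hz t

end Statement15Aux2
section Statement15Aux3

variable {k : ℕ} (ω : Finpartition (Finset.Icc 1 (2 * k)))

lemma min'_Icc (B : Blk ω) :
    B.1.min' (ω.nonempty_of_mem_parts B.2) ∈ Finset.Icc 1 (2 * k) :=
  ω.le B.2 (B.1.min'_mem _)

lemma coord_min {R : Type*} [CommRing R] (z : Idx ω → R) (B : Blk ω) :
    z (some B) = piF ω z (B.1.min' (ω.nonempty_of_mem_parts B.2) - 1)
      + piF ω z (B.1.min' (ω.nonempty_of_mem_parts B.2)) := by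
  have hmI := min'_Icc ω B
  have hm12 := Finset.mem_Icc.1 hmI
  have h3 := piF_add_succ ω z (B.1.min' (ω.nonempty_of_mem_parts B.2) - 1)
  rw [show B.1.min' (ω.nonempty_of_mem_parts B.2) - 1 + 1
      = B.1.min' (ω.nonempty_of_mem_parts B.2) by omega] at h3
  rw [h3, zv_pos ω z hmI]
  have hsub : (⟨ω.part (B.1.min' (ω.nonempty_of_mem_parts B.2)), ω.part_mem.2 hmI⟩ : Blk ω) = B :=
    Subtype.ext (ω.part_eq_of_mem B.2 (B.1.min'_mem _))
  rw [hsub]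

/-- The region in `(Idx ω → ℝ)` whose `1/n`-lattice points are `SZ ω p n`. -/
def UB (p n : ℕ) : Set (Idx ω → ℝ) := {w | (fun t => ⌊(n : ℝ) * w t⌋) ∈ SZ ω p n}

lemma mem_box_floor {n : ℕ} (hn : 0 < n) {z : Idx ω → ℤ} {w : Idx ω → ℝ}
    (hw : w ∈ Set.univ.pi (fun t => Set.Ico ((z t : ℝ) / n) (((z t : ℝ) + 1) / n))) :
    ∀ t, ⌊(n : ℝ) * w t⌋ = z t := by
  have hn' : (0 : ℝ) < n := by exact_mod_cast hn
  intro t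
  have h1 := (hw t (Set.mem_univ t)).1
  have h2 := (hw t (Set.mem_univ t)).2
  rw [div_le_iff₀ hn'] at h1
  rw [lt_div_iff₀ hn'] at h2
  rw [Int.floor_eq_iff]
  constructor
  · nlinarith
  · push_cast; nlinarith

lemma UB_eq (p n : ℕ) (hn : 0 < n) :
    UB ω p n = ⋃ z ∈ (SZ_finite ω p n).toFinset,
      Set.univ.pi (fun t => Set.Ico ((z t : ℝ) / n) (((z t : ℝ) + 1) / n)) := by
  have hn' : (0 : ℝ) < n := by exact_mod_cast hn
  ext w
  simp only [UB, Set.mem_setOf_eq, Set.mem_iUnion, Set.Finite.mem_toFinset, exists_prop]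
  constructor
  · intro h
    refine ⟨_, h, fun t _ => ?_⟩
    constructor
    · rw [div_le_iff₀ hn']
      have := Int.floor_le ((n : ℝ) * w t)
      nlinarith
    · rw [lt_div_iff₀ hn']
      have := Int.lt_floor_add_one ((n : ℝ) * w t)
      push_cast at this
      nlinarith
  · rintro ⟨z, hz, hw⟩
    have : (fun t => ⌊(n : ℝ) * w t⌋) = z := funext (mem_box_floor ω hn hw)
    rw [this]; exact hz

lemma UB_measurable (p n : ℕ) (hn : 0 < n) : MeasurableSet (UB ω p n) := by
  rw [UB_eq ω p n hn]
  exact (SZ_finite ω p n).toFinset.measurableSet_biUnion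
    fun z _ => MeasurableSet.univ_pi fun t => measurableSet_Ico

lemma volume_UB (p n : ℕ) (hn : 0 < n) :
    volume (UB ω p n)
      = ((SZ ω p n).ncard : ℝ≥0∞) * ENNReal.ofReal (1 / (n : ℝ)) ^ Fintype.card (Idx ω) := by
  classical
  have hn' : (0 : ℝ) < n := by exact_mod_cast hn
  rw [UB_eq ω p n hn]
  rw [measure_biUnion_finset ?hd (fun z _ => MeasurableSet.univ_pi fun t => measurableSet_Ico)]
  case hd =>
    intro z hz z' hz' hne
    simp only [Function.onFun]
    rw [Set.disjoint_left]
    intro w hw hw'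
    exact hne (funext fun t => ((mem_box_floor ω hn hw t).symm.trans (mem_box_floor ω hn hw' t)))
  have hvol : ∀ z : Idx ω → ℤ,
      volume (Set.univ.pi (fun t => Set.Ico ((z t : ℝ) / n) (((z t : ℝ) + 1) / n)))
        = ENNReal.ofReal (1 / (n : ℝ)) ^ Fintype.card (Idx ω) := by
    intro z
    rw [volume_pi_pi]
    have heach : ∀ t : Idx ω,
        volume (Set.Ico ((z t : ℝ) / n) (((z t : ℝ) + 1) / n)) = ENNReal.ofReal (1 / n) := by
      intro t
      rw [Real.volume_Ico]
      congr 1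
      field_simp
      ring
    rw [Finset.prod_congr rfl (fun t _ => heach t), Finset.prod_const, Finset.card_univ]
  rw [Finset.sum_congr rfl (fun z _ => hvol z), Finset.sum_const,
    Set.ncard_eq_toFinset_card (SZ ω p n) (SZ_finite ω p n)]
  rw [nsmul_eq_mul]

lemma integral_UB (p n : ℕ) (hn : 0 < n) :
    ∫ w, Set.indicator (UB ω p n) (fun _ => (1 : ℝ)) w
      = ((SZ ω p n).ncard : ℝ) * (1 / (n : ℝ)) ^ Fintype.card (Idx ω) := by
  have h := MeasureTheory.integral_indicator_one (μ := (volume : Measure (Idx ω → ℝ)))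
    (UB_measurable ω p n hn)
  rw [measureReal_def, volume_UB ω p n hn] at h
  rw [show (Set.indicator (UB ω p n) (fun _ => (1 : ℝ))) = Set.indicator (UB ω p n) 1 from rfl, h]
  rw [ENNReal.toReal_mul, ENNReal.toReal_pow, ENNReal.toReal_ofReal (by positivity)]
  simp

/-- The scaling limits of the bounds. -/
noncomputable def gam (y : ℝ) (i : ℕ) : ℝ := if Even i then y else 1

/-- The limit polytope. -/
def KS (y : ℝ) : Set (Idx ω → ℝ) :=
  {w | (∀ i ≤ 2 * k, 0 < piF ω w i ∧ piF ω w i < gam y i) ∧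
    ∀ B B' : Blk ω, B ≠ B' → w (some B) ≠ w (some B')}

lemma continuous_piF (i : ℕ) : Continuous fun w : Idx ω → ℝ => piF ω w i := by
  unfold piF
  refine Continuous.add ?_ ?_
  · exact continuous_const.mul (continuous_apply none)
  · refine continuous_finset_sum _ fun j _ => ?_
    refine Continuous.mul continuous_const ?_
    unfold zv
    split
    · exact continuous_apply _
    · exact continuous_const

lemma KS_open (y : ℝ) : IsOpen (KS ω y) := by
  classical
  have h1 : KS ω y =
      (⋂ i ∈ Finset.range (2 * k + 1), ({w | 0 < piF ω w i} ∩ {w | piF ω w i < gam y i}))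
      ∩ ⋂ q ∈ Finset.univ.filter (fun q : Blk ω × Blk ω => q.1 ≠ q.2),
          {w | w (some q.1) ≠ w (some q.2)} := by
    ext w
    simp only [KS, Set.mem_setOf_eq, Set.mem_inter_iff, Set.mem_iInter, Finset.mem_range,
      Finset.mem_filter, Finset.mem_univ, true_and]
    constructor
    · rintro ⟨ha, hb⟩
      exact ⟨fun i hi => ha i (by omega), fun q hq => hb q.1 q.2 hq⟩
    · rintro ⟨ha, hb⟩
      exact ⟨fun i hi => ha i (by omega), fun B B' hne => hb (B, B') hne⟩
  rw [h1]
  refine IsOpen.inter ?_ ?_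
  · refine isOpen_biInter_finset fun i _ => ?_
    exact (isOpen_lt continuous_const (continuous_piF ω i)).inter
      (isOpen_lt (continuous_piF ω i) continuous_const)
  · refine isOpen_biInter_finset fun q _ => ?_
    exact isOpen_ne_fun (continuous_apply _) (continuous_apply _)

lemma KS_subset_box {y : ℝ} (hy : 0 < y) :
    KS ω y ⊆ Set.univ.pi fun _ : Idx ω => Set.Icc (0 : ℝ) (2 * max y 1) := by
  intro w hw
  obtain ⟨hb, _⟩ := hw
  have hgam : ∀ i, gam y i ≤ max y 1 := by
    intro i; unfold gam; split
    · exact le_max_left _ _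
    · exact le_max_right _ _
  have hb' : ∀ i, i ≤ 2 * k → 0 < piF ω w i ∧ piF ω w i < max y 1 := by
    intro i hi
    exact ⟨(hb i hi).1, lt_of_lt_of_le (hb i hi).2 (hgam i)⟩
  intro t _
  rw [Set.mem_Icc]
  match t with
  | none =>
    have h0 := hb' 0 (by omega)
    rw [piF_zero] at h0
    constructor
    · linarith [h0.1]
    · have : (1 : ℝ) ≤ max y 1 := le_max_right _ _
      linarith [h0.2]
  | some B =>
    have hm12 := Finset.mem_Icc.1 (min'_Icc ω B)
    have h1 := hb' (B.1.min' (ω.nonempty_of_mem_parts B.2) - 1) (by omega)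
    have h2 := hb' (B.1.min' (ω.nonempty_of_mem_parts B.2)) (by omega)
    rw [coord_min ω w B]
    constructor
    · linarith [h1.1, h2.1]
    · linarith [h1.2, h2.2]

lemma volume_KS_ne_top {y : ℝ} (hy : 0 < y) : volume (KS ω y) ≠ ⊤ := by
  refine ne_top_of_le_ne_top ?_ (measure_mono (KS_subset_box ω hy))
  rw [volume_pi_pi]
  exact ENNReal.prod_ne_top fun t _ => by
    rw [Real.volume_Icc]; exact ENNReal.ofReal_ne_top

lemma volume_level_zero (f : (Idx ω → ℝ) →ₗ[ℝ] ℝ) (t0 : Idx ω)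
    (hf : f (Pi.single t0 1) ≠ 0) (c : ℝ) :
    volume {w : Idx ω → ℝ | f w = c} = 0 := by
  by_cases hne : {w : Idx ω → ℝ | f w = c}.Nonempty
  · obtain ⟨w0, hw0⟩ := hne
    have hw0' : f w0 = c := hw0
    have hS : {w : Idx ω → ℝ | f w = c} = ↑(AffineSubspace.mk' w0 (LinearMap.ker f)) := by
      ext w
      rw [Set.mem_setOf_eq, SetLike.mem_coe, AffineSubspace.mem_mk',
        LinearMap.mem_ker, vsub_eq_sub, map_sub, hw0', sub_eq_zero]
    rw [hS]
    refine Measure.addHaar_affineSubspace volume _ ?_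
    intro htop
    have h1 : w0 + Pi.single t0 1 ∈ AffineSubspace.mk' w0 (LinearMap.ker f) := by
      rw [htop]; exact AffineSubspace.mem_top _ _ _
    rw [AffineSubspace.mem_mk', vsub_eq_sub, add_sub_cancel_left,
      LinearMap.mem_ker] at h1
    exact hf h1
  · rw [Set.not_nonempty_iff_eq_empty.1 hne]
    simp

/-- `piF` as a linear map. -/
noncomputable def piFL (i : ℕ) : (Idx ω → ℝ) →ₗ[ℝ] ℝ where
  toFun w := piF ω w i
  map_add' a b := piF_add ω a b i
  map_smul' c a := by
    rw [RingHom.id_apply]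
    exact piF_smul ω c a i

lemma piFL_single_none (i : ℕ) : piFL ω i (Pi.single none 1) = (-1 : ℝ) ^ i := by
  show piF ω (Pi.single none 1) i = _
  unfold piF
  have h1 : ∀ j ∈ Finset.Icc 1 i, (-1 : ℝ) ^ (i + j) * zv ω (Pi.single none 1) j = 0 := by
    intro j _
    unfold zv
    split
    · rw [Pi.single_eq_of_ne (by simp)]
      ring
    · ring
  rw [Finset.sum_eq_zero h1, Pi.single_eq_same]
  ring

lemma volume_piF_level (i : ℕ) (c : ℝ) : volume {w : Idx ω → ℝ | piF ω w i = c} = 0 := by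
  have : {w : Idx ω → ℝ | piF ω w i = c} = {w : Idx ω → ℝ | piFL ω i w = c} := rfl
  rw [this]
  refine volume_level_zero ω (piFL ω i) none ?_ c
  rw [piFL_single_none]
  positivity

lemma volume_pair_level (B B' : Blk ω) (hne : B ≠ B') :
    volume {w : Idx ω → ℝ | w (some B) = w (some B')} = 0 := by
  classical
  set f : (Idx ω → ℝ) →ₗ[ℝ] ℝ :=
    (LinearMap.proj (some B) : (Idx ω → ℝ) →ₗ[ℝ] ℝ)
      - (LinearMap.proj (some B') : (Idx ω → ℝ) →ₗ[ℝ] ℝ) with hf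
  have heq : {w : Idx ω → ℝ | w (some B) = w (some B')} = {w : Idx ω → ℝ | f w = 0} := by
    ext w
    simp only [Set.mem_setOf_eq, hf, LinearMap.sub_apply, LinearMap.proj_apply, sub_eq_zero]
  rw [heq]
  refine volume_level_zero ω f (some B) ?_ 0
  simp only [hf, LinearMap.sub_apply, LinearMap.proj_apply]
  rw [Pi.single_eq_same, Pi.single_eq_of_ne ((Option.some_injective _).ne hne.symm)]
  norm_num

/-- The negligible boundary set. -/
def Zbad (y : ℝ) : Set (Idx ω → ℝ) :=
  (⋃ i ∈ Finset.range (2 * k + 1), ({w | piF ω w i = 0} ∪ {w | piF ω w i = gam y i}))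
  ∪ ⋃ q ∈ Finset.univ.filter (fun q : Blk ω × Blk ω => q.1 ≠ q.2),
      {w | w (some q.1) = w (some q.2)}

lemma volume_Zbad (y : ℝ) : volume (Zbad ω y) = 0 := by
  classical
  unfold Zbad
  rw [measure_union_null_iff]
  constructor
  · rw [measure_iUnion_null_iff]
    intro i
    rw [measure_iUnion_null_iff]
    intro _
    rw [measure_union_null_iff]
    exact ⟨volume_piF_level ω i 0, volume_piF_level ω i (gam y i)⟩
  · rw [measure_iUnion_null_iff]
    intro q
    rw [measure_iUnion_null_iff]
    intro hq
    simp only [Finset.mem_filter] at hq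
    exact volume_pair_level ω q.1 q.2 hq.2

end Statement15Aux3
section Statement15Aux4

variable {k : ℕ} (ω : Finpartition (Finset.Icc 1 (2 * k)))

lemma abs_sub_lt_one_of_floor_eq {x y : ℝ} (h : ⌊x⌋ = ⌊y⌋) : |x - y| < 1 := by
  have h1 := Int.floor_le x
  have h2 := Int.lt_floor_add_one x
  have h3 := Int.floor_le y
  have h4 := Int.lt_floor_add_one y
  rw [h] at h1 h2
  rw [abs_lt]
  constructor <;> linarith

lemma tendsto_bound_div {y : ℝ} (p : ℕ → ℕ)
    (hp : Tendsto (fun n : ℕ => (p n : ℝ) / n) atTop (𝓝 y)) (i : ℕ) :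
    Tendsto (fun n : ℕ => (if Even i then (p n : ℝ) else (n : ℝ)) / n) atTop (𝓝 (gam y i)) := by
  unfold gam
  split
  · exact hp
  · refine Tendsto.congr' ?_ tendsto_const_nhds
    filter_upwards [eventually_ge_atTop 1] with n hn
    rw [div_self (by exact_mod_cast Nat.one_le_iff_ne_zero.1 hn : (n : ℝ) ≠ 0)]

lemma eventually_mem_UB (hsym : SymmetricPartition ω) {y : ℝ}
    {p : ℕ → ℕ} (hp : Tendsto (fun n : ℕ => (p n : ℝ) / n) atTop (𝓝 y))
    {w : Idx ω → ℝ} (hw : w ∈ KS ω y) :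
    ∀ᶠ n : ℕ in atTop, w ∈ UB ω (p n) n := by
  obtain ⟨hbd, hdist⟩ := hw
  have hbds : ∀ᶠ n : ℕ in atTop, ∀ i ∈ Finset.range (2 * k + 1),
      1 ≤ piF ω (fun t => ⌊(n : ℝ) * w t⌋) i ∧
      piF ω (fun t => ⌊(n : ℝ) * w t⌋) i ≤ (if Even i then ((p n : ℕ) : ℤ) else (n : ℤ)) := by
    rw [Finset.eventually_all]
    intro i hi
    rw [Finset.mem_range] at hi
    have hi' : i ≤ 2 * k := by omega
    set a := piF ω w i with ha
    have ha1 : 0 < a := (hbd i hi').1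
    have ha2 : a < gam y i := (hbd i hi').2
    set ε := (gam y i - a) / 2 with hε
    have hε0 : 0 < ε := by rw [hε]; linarith
    have hev1 : ∀ᶠ n : ℕ in atTop, (2 + i : ℝ) ≤ (n : ℝ) * a :=
      ((tendsto_natCast_atTop_atTop (R := ℝ)).atTop_mul_const ha1).eventually_ge_atTop _
    have hev2 : ∀ᶠ n : ℕ in atTop, (1 + i : ℝ) ≤ (n : ℝ) * ε :=
      ((tendsto_natCast_atTop_atTop (R := ℝ)).atTop_mul_const hε0).eventually_ge_atTop _
    have hev3 : ∀ᶠ n : ℕ in atTop, a + ε < (if Even i then (p n : ℝ) else (n : ℝ)) / n :=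
      (tendsto_bound_div p hp i).eventually_const_lt (by rw [hε]; linarith)
    filter_upwards [hev1, hev2, hev3, eventually_ge_atTop 1] with n h1 h2 h3 h4
    have hn' : (0 : ℝ) < n := by
      have : (1 : ℝ) ≤ n := by exact_mod_cast h4
      linarith
    have hest := piF_floor_est ω w n i
    rw [abs_le] at hest
    obtain ⟨hestl, hestu⟩ := hest
    constructor
    · have hreal : (1 : ℝ) ≤ ((piF ω (fun t => ⌊(n : ℝ) * w t⌋) i : ℤ) : ℝ) := by linarith
      exact_mod_cast hreal
    · have hb : (n : ℝ) * (a + ε) ≤ (if Even i then (p n : ℝ) else (n : ℝ)) := by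
        have := (lt_div_iff₀ hn').1 h3
        nlinarith
      have hfin : ((piF ω (fun t => ⌊(n : ℝ) * w t⌋) i : ℤ) : ℝ)
          ≤ (if Even i then (p n : ℝ) else (n : ℝ)) := by nlinarith
      have hcast : (((if Even i then ((p n : ℕ) : ℤ) else (n : ℤ))) : ℝ)
          = (if Even i then (p n : ℝ) else (n : ℝ)) := by split <;> simp
      rw [← hcast] at hfin
      exact_mod_cast hfin
  have hdists : ∀ᶠ n : ℕ in atTop, ∀ B : Blk ω, ∀ B' : Blk ω, B ≠ B' →
      (⌊(n : ℝ) * w (some B)⌋ ≠ ⌊(n : ℝ) * w (some B')⌋) := by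
    rw [Filter.eventually_all]
    intro B
    rw [Filter.eventually_all]
    intro B'
    by_cases hBB : B = B'
    · exact Filter.Eventually.of_forall fun n h => absurd hBB h
    · have hΔ : 0 < |w (some B) - w (some B')| :=
        abs_pos.2 (sub_ne_zero.2 (hdist B B' hBB))
      have hev : ∀ᶠ n : ℕ in atTop, (1 : ℝ) ≤ (n : ℝ) * |w (some B) - w (some B')| :=
        ((tendsto_natCast_atTop_atTop (R := ℝ)).atTop_mul_const hΔ).eventually_ge_atTop _
      filter_upwards [hev] with n hn _ heq
      have habs := abs_sub_lt_one_of_floor_eq heq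
      rw [← mul_sub, abs_mul, abs_of_nonneg (by positivity : (0:ℝ) ≤ (n:ℝ))] at habs
      linarith
  filter_upwards [hbds, hdists] with n h1 h2
  exact ⟨closure_of_symmetric ω hsym _,
    fun i hi => h1 i (Finset.mem_range.2 (by omega)), h2⟩

lemma eventually_not_mem_UB {y : ℝ}
    {p : ℕ → ℕ} (hp : Tendsto (fun n : ℕ => (p n : ℝ) / n) atTop (𝓝 y))
    {w : Idx ω → ℝ} {i : ℕ} (hi : i ≤ 2 * k)
    (hbad : piF ω w i < 0 ∨ gam y i < piF ω w i) :
    ∀ᶠ n : ℕ in atTop, w ∉ UB ω (p n) n := by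
  set a := piF ω w i with ha
  cases hbad with
  | inl hneg =>
    have hev : ∀ᶠ n : ℕ in atTop, (n : ℝ) * a ≤ -(1 + i) :=
      ((tendsto_natCast_atTop_atTop (R := ℝ)).atTop_mul_const_of_neg hneg).eventually_le_atBot _
    filter_upwards [hev] with n hn hmem
    obtain ⟨_, hbd, _⟩ := hmem
    have h1 := (hbd i hi).1
    have hest := piF_floor_est ω w n i
    rw [abs_le] at hest
    have hle : ((piF ω (fun t => ⌊(n : ℝ) * w t⌋) i : ℤ) : ℝ) ≤ 0 := by linarith [hest.2]
    have hge : (1 : ℝ) ≤ ((piF ω (fun t => ⌊(n : ℝ) * w t⌋) i : ℤ) : ℝ) := by exact_mod_cast h1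
    linarith
  | inr hgt =>
    set ε := (a - gam y i) / 2 with hε
    have hε0 : 0 < ε := by rw [hε]; linarith
    have hev2 : ∀ᶠ n : ℕ in atTop, (if Even i then (p n : ℝ) else (n : ℝ)) / n < gam y i + ε :=
      (tendsto_bound_div p hp i).eventually_lt_const (by linarith)
    have hev3 : ∀ᶠ n : ℕ in atTop, (1 + i : ℝ) ≤ (n : ℝ) * ε :=
      ((tendsto_natCast_atTop_atTop (R := ℝ)).atTop_mul_const hε0).eventually_ge_atTop _
    filter_upwards [hev2, hev3, eventually_ge_atTop 1] with n h2 h3 h4 hmem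
    have hn' : (0 : ℝ) < n := by
      have : (1 : ℝ) ≤ n := by exact_mod_cast h4
      linarith
    obtain ⟨_, hbd, _⟩ := hmem
    have hub := (hbd i hi).2
    have hest := piF_floor_est ω w n i
    rw [abs_le] at hest
    have hX : (n : ℝ) * (gam y i + ε) ≤ ((piF ω (fun t => ⌊(n : ℝ) * w t⌋) i : ℤ) : ℝ) := by
      have haeq : a = gam y i + 2 * ε := by rw [hε]; ring
      nlinarith [hest.1]
    have hbnd : (if Even i then (p n : ℝ) else (n : ℝ)) < (n : ℝ) * (gam y i + ε) := by
      have := (div_lt_iff₀ hn').1 h2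
      nlinarith
    have hcast : (((if Even i then ((p n : ℕ) : ℤ) else (n : ℤ))) : ℝ)
        = (if Even i then (p n : ℝ) else (n : ℝ)) := by split <;> simp
    have hub' : ((piF ω (fun t => ⌊(n : ℝ) * w t⌋) i : ℤ) : ℝ)
        ≤ (if Even i then (p n : ℝ) else (n : ℝ)) := by
      rw [← hcast]
      exact_mod_cast hub
    linarith

set_option maxHeartbeats 1000000 in
/-- The interior point of `KS`. -/
lemma KS_nonempty {y : ℝ} (hy : 0 < y) : (KS ω y).Nonempty := by
  classical
  set u0 : ℝ := min y 1 / 2 with hu0def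
  have hu0 : 0 < u0 := by
    rw [hu0def]
    have : 0 < min y 1 := lt_min hy one_pos
    linarith
  have hu0y : 2 * u0 ≤ y := by
    rw [hu0def]; have := min_le_left y 1; linarith
  have hu01 : 2 * u0 ≤ 1 := by
    rw [hu0def]; have := min_le_right y 1; linarith
  set b := ω.parts.card with hbdef
  set δ : ℝ := u0 / (2 * (2 * k + 1) * (b + 1)) with hδdef
  have hδ0 : 0 < δ := by
    rw [hδdef]
    positivity
  set enc : Blk ω → ℕ := fun B => ((Fintype.equivFin (Blk ω)) B : ℕ) with hencdef
  have hENC : ∀ B, (enc B : ℝ) + 1 ≤ b + 1 := by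
    intro B
    have h1 : enc B < Fintype.card (Blk ω) := ((Fintype.equivFin (Blk ω)) B).isLt
    have h2 : Fintype.card (Blk ω) = b := by rw [hbdef]; exact Fintype.card_coe _
    have : (enc B : ℝ) < b := by exact_mod_cast h2 ▸ h1
    linarith
  set base : Idx ω → ℝ := fun t => match t with
    | none => u0
    | some _ => u0 + 1 / 2 with hbase
  set pert : Idx ω → ℝ := fun t => match t with
    | none => 0
    | some B => δ * (enc B + 1) with hpert
  have hpert_bd : ∀ t, |pert t| ≤ δ * (b + 1) := by
    intro t
    match t with
    | none =>
      simp only [hpert]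
      rw [abs_zero]
      positivity
    | some B =>
      simp only [hpert]
      rw [abs_of_nonneg (by positivity)]
      have := hENC B
      nlinarith
  have hkey : (2 * (k : ℝ) + 1) * (δ * ((b : ℝ) + 1)) = u0 / 2 := by
    have hne1 : ((b : ℝ) + 1) ≠ 0 := by positivity
    have hne2 : (2 * (k : ℝ) + 1) ≠ 0 := by positivity
    rw [hδdef]
    field_simp
  have hpiFpert : ∀ i, i ≤ 2 * k → |piF ω pert i| ≤ u0 / 2 := by
    intro i hi
    refine le_trans (abs_piF_le ω (δ * (b + 1)) pert hpert_bd i)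
      (le_trans ?_ hkey.le)
    have h1 : (1 + (i : ℝ)) ≤ 2 * (k : ℝ) + 1 := by
      have : (i : ℝ) ≤ 2 * (k : ℝ) := by exact_mod_cast hi
      linarith
    have h3 : (0 : ℝ) ≤ δ * ((b : ℝ) + 1) := by positivity
    nlinarith
  have hpiFbase : ∀ i, i ≤ 2 * k →
      piF ω base i = if Even i then u0 else 1 / 2 := by
    intro i hi
    unfold piF
    have hzv : ∀ j ∈ Finset.Icc 1 i, (-1 : ℝ) ^ (i + j) * zv ω base j
        = (-1 : ℝ) ^ (i + j) * (u0 + 1 / 2) := by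
      intro j hj
      rw [Finset.mem_Icc] at hj
      have hjI : j ∈ Finset.Icc 1 (2 * k) := Finset.mem_Icc.2 (by omega)
      rw [zv_pos ω base hjI]
    rw [Finset.sum_congr rfl hzv, ← Finset.sum_mul, sum_sign]
    by_cases he : Even i
    · rw [if_pos he, if_pos he, he.neg_one_pow]
      ring
    · rw [if_neg he, if_neg he, (Nat.not_even_iff_odd.1 he).neg_one_pow]
      ring
  refine ⟨base + pert, fun i hi => ?_, fun B B' hne heq => ?_⟩
  · rw [piF_add, hpiFbase i hi]
    have hp := hpiFpert i hi
    rw [abs_le] at hp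
    unfold gam
    by_cases he : Even i
    · rw [if_pos he, if_pos he]
      constructor
      · linarith [hp.1]
      · nlinarith [hp.2, hu0y, hy]
    · rw [if_neg he, if_neg he]
      constructor
      · linarith [hp.1, hu01]
      · linarith [hp.2, hu01]
  · have heq' : δ * ((enc B : ℝ) + 1) = δ * ((enc B' : ℝ) + 1) := by
      have h4 := heq
      simp only [Pi.add_apply] at h4
      have hb1 : base (some B) = u0 + 1 / 2 := rfl
      have hb2 : base (some B') = u0 + 1 / 2 := rfl
      have hp1 : pert (some B) = δ * ((enc B : ℝ) + 1) := rfl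
      have hp2 : pert (some B') = δ * ((enc B' : ℝ) + 1) := rfl
      rw [hp1, hp2] at h4
      linarith
    have henc : (enc B : ℝ) = (enc B' : ℝ) := by
      have hc := mul_left_cancel₀ (ne_of_gt hδ0) heq'
      linarith
    have henc' : enc B = enc B' := by exact_mod_cast henc
    exact hne ((Fintype.equivFin (Blk ω)).injective (Fin.ext henc'))

lemma volume_KS_pos {y : ℝ} (hy : 0 < y) : 0 < volume (KS ω y) :=
  (KS_open ω y).measure_pos volume (KS_nonempty ω hy)

/-- Count bound in the non-symmetric case. -/
lemma ncard_SZ_le_nonsym (hns : ¬SymmetricPartition ω) (p n : ℕ) :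
    (SZ ω p n).ncard ≤ (2 * (p + n) + 1) ^ ω.parts.card := by
  classical
  unfold SymmetricPartition at hns
  push_neg at hns
  obtain ⟨B0, hB0, hcount⟩ := hns
  set b0 : Blk ω := ⟨B0, hB0⟩ with hb0
  have hm0 : (∑ j ∈ B0, (-1 : ℤ) ^ j) ≠ 0 := by
    rw [neg_one_sum]
    intro h
    exact hcount (by exact_mod_cast (sub_eq_zero.1 h).symm)
  set T := Fintype.piFinset fun _ : {t : Idx ω // t ≠ some b0} =>
    Finset.Icc (0 : ℤ) (2 * ((p : ℤ) + n)) with hT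
  have hmaps : ∀ z ∈ SZ ω p n,
      (fun t : {t : Idx ω // t ≠ some b0} => z t.1) ∈ (T : Set _) := by
    intro z hz
    rw [Finset.mem_coe, Fintype.mem_piFinset]
    intro t
    rw [Finset.mem_Icc]
    exact SZ_bounds ω hz t.1
  have hinj : Set.InjOn (fun z (t : {t : Idx ω // t ≠ some b0}) => z t.1) (SZ ω p n) := by
    intro z hz z' hz' he
    have hoff : ∀ t : Idx ω, t ≠ some b0 → z t = z' t := by
      intro t ht
      exact congrFun he ⟨t, ht⟩
    have hsum := closure_sum ω z hz.1
    have hsum' := closure_sum ω z' hz'.1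
    have hsub : ∑ B ∈ ω.parts.attach,
        (∑ j ∈ B.1, (-1 : ℤ) ^ j) * (z (some ⟨B.1, B.2⟩) - z' (some ⟨B.1, B.2⟩)) = 0 := by
      simp only [mul_sub, Finset.sum_sub_distrib, hsum, hsum', sub_zero]
    have hzero : ∀ B ∈ ω.parts.attach, B ≠ b0 →
        (∑ j ∈ B.1, (-1 : ℤ) ^ j) * (z (some ⟨B.1, B.2⟩) - z' (some ⟨B.1, B.2⟩)) = 0 := by
      intro B _ hBne
      have : z (some ⟨B.1, B.2⟩) = z' (some ⟨B.1, B.2⟩) := by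
        refine hoff _ fun hcontra => hBne ?_
        have := Option.some_injective _ hcontra
        exact this
      rw [this, sub_self, mul_zero]
    have hb0eq : (∑ j ∈ B0, (-1 : ℤ) ^ j) * (z (some b0) - z' (some b0)) = 0 := by
      have := Finset.sum_eq_single_of_mem b0 (Finset.mem_attach _ _) hzero
      rw [← this, hsub]
    have hdiff : z (some b0) = z' (some b0) := by
      rcases mul_eq_zero.1 hb0eq with h | h
      · exact absurd h hm0
      · linarith [sub_eq_zero.1 h]
    funext t
    by_cases ht : t = some b0
    · rw [ht, hdiff]
    · exact hoff t ht
  have hcard1 : (SZ ω p n).ncard ≤ (T : Set _).ncard :=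
    Set.ncard_le_ncard_of_injOn _ hmaps hinj (T.finite_toSet)
  rw [Set.ncard_coe_finset] at hcard1
  refine le_trans hcard1 ?_
  rw [hT, Fintype.card_piFinset]
  have hIcc : (Finset.Icc (0 : ℤ) (2 * ((p : ℤ) + n))).card = 2 * (p + n) + 1 := by
    rw [Int.card_Icc]
    omega
  rw [Finset.prod_congr rfl (fun _ _ => hIcc), Finset.prod_const]
  have hcard2 : Fintype.card {t : Idx ω // t ≠ some b0} = ω.parts.card := by
    rw [Fintype.card_subtype_compl]
    have h1 : Fintype.card (Idx ω) = ω.parts.card + 1 := by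
      rw [Fintype.card_option, Fintype.card_coe]
    have h2 : Fintype.card {t : Idx ω // t = some b0} = 1 := Fintype.card_subtype_eq _
    omega
  rw [Finset.card_univ, hcard2]

end Statement15Aux4
section Statement15Assembly

variable {k : ℕ} (ω : Finpartition (Finset.Icc 1 (2 * k)))

lemma volume_box_ne_top (y : ℝ) :
    volume (Set.univ.pi fun _ : Idx ω => Set.Icc (-1 : ℝ) (2 * y + 5)) ≠ ⊤ := by
  rw [volume_pi_pi]
  exact (ENNReal.prod_lt_top fun t _ => by
    rw [Real.volume_Icc]; exact ENNReal.ofReal_lt_top).ne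

lemma tendsto_integral_UB (hsym : SymmetricPartition ω) {y : ℝ} (hy : 0 < y)
    {p : ℕ → ℕ} (hp : Tendsto (fun n : ℕ => (p n : ℝ) / n) atTop (𝓝 y)) :
    Tendsto (fun n : ℕ => ((SZ ω (p n) n).ncard : ℝ) * (1 / (n : ℝ)) ^ Fintype.card (Idx ω))
      atTop (𝓝 ((volume (KS ω y)).toReal)) := by
  classical
  set box := Set.univ.pi fun _ : Idx ω => Set.Icc (-1 : ℝ) (2 * y + 5) with hbox
  have hboxmeas : MeasurableSet box := MeasurableSet.univ_pi fun _ => measurableSet_Icc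
  have hmain : Tendsto
      (fun n : ℕ => ∫ w, Set.indicator (UB ω (p n) n) (fun _ => (1 : ℝ)) w) atTop
      (𝓝 (∫ w, Set.indicator (KS ω y) (fun _ => (1 : ℝ)) w)) := by
    refine MeasureTheory.tendsto_integral_filter_of_dominated_convergence
      (Set.indicator box (fun _ => (1 : ℝ))) ?_ ?_ ?_ ?_
    · filter_upwards [eventually_gt_atTop 0] with n hn
      exact ((measurable_const.indicator (UB_measurable ω (p n) n hn)).aestronglyMeasurable)
    · have hev1 : ∀ᶠ n : ℕ in atTop, (p n : ℝ) ≤ (y + 1) * n := by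
        filter_upwards [hp.eventually_lt_const (by linarith : y < y + 1),
          eventually_gt_atTop 0] with n h1 h2
        have hn' : (0 : ℝ) < n := by exact_mod_cast h2
        rw [div_lt_iff₀ hn'] at h1
        linarith
      filter_upwards [hev1, eventually_gt_atTop 0] with n h1 h2
      refine Filter.Eventually.of_forall fun w => ?_
      have hn' : (0 : ℝ) < n := by exact_mod_cast h2
      by_cases hw : w ∈ UB ω (p n) n
      · rw [Set.indicator_of_mem hw]
        have hwbox : w ∈ box := by
          rw [hbox]
          intro t _
          rw [Set.mem_Icc]
          have hz := SZ_bounds ω hw t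
          have hfl := Int.floor_le ((n : ℝ) * w t)
          have hfu := Int.lt_floor_add_one ((n : ℝ) * w t)
          have hz0 : (0 : ℝ) ≤ ((⌊(n : ℝ) * w t⌋ : ℤ) : ℝ) := by exact_mod_cast hz.1
          have hz1 : ((⌊(n : ℝ) * w t⌋ : ℤ) : ℝ) ≤ 2 * ((p n : ℝ) + n) := by
            exact_mod_cast hz.2
          have hn1 : (1 : ℝ) ≤ n := by exact_mod_cast h2
          constructor
          · nlinarith
          · nlinarith
        rw [Set.indicator_of_mem hwbox]
        simp
      · rw [Set.indicator_of_notMem hw]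
        simp only [norm_zero]
        by_cases hwb : w ∈ box
        · rw [Set.indicator_of_mem hwb]; norm_num
        · rw [Set.indicator_of_notMem hwb]
    · rw [MeasureTheory.integrable_indicator_iff hboxmeas]
      exact MeasureTheory.integrableOn_const (volume_box_ne_top ω y)
    · have hz := volume_Zbad ω y
      filter_upwards [MeasureTheory.measure_eq_zero_iff_ae_notMem.1 hz] with w hw
      rw [Zbad, Set.mem_union, not_or] at hw
      obtain ⟨hw1, hw2⟩ := hw
      simp only [Set.mem_iUnion, Set.mem_union, Set.mem_setOf_eq, not_exists, not_or] at hw1 hw2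
      have hdist : ∀ B B' : Blk ω, B ≠ B' → w (some B) ≠ w (some B') := by
        intro B B' hne
        exact hw2 (B, B') (Finset.mem_filter.2 ⟨Finset.mem_univ _, hne⟩)
      by_cases hwK : w ∈ KS ω y
      · rw [Set.indicator_of_mem hwK]
        refine Tendsto.congr' ?_ tendsto_const_nhds
        filter_upwards [eventually_mem_UB ω hsym hp hwK] with n hn
        exact (Set.indicator_of_mem hn (fun _ => (1 : ℝ))).symm
      · rw [Set.indicator_of_notMem hwK]
        have hbad : ∃ i, i ≤ 2 * k ∧ (piF ω w i < 0 ∨ gam y i < piF ω w i) := by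
          by_contra hcon
          push_neg at hcon
          apply hwK
          refine ⟨fun i hi => ?_, hdist⟩
          have h1 := hw1 i (Finset.mem_range.2 (by omega))
          have h2 := hcon i hi
          constructor
          · exact lt_of_le_of_ne h2.1 (Ne.symm h1.1)
          · exact lt_of_le_of_ne h2.2 h1.2
        obtain ⟨i, hi, hbad⟩ := hbad
        refine Tendsto.congr' ?_ tendsto_const_nhds
        filter_upwards [eventually_not_mem_UB ω hp hi hbad] with n hn
        exact (Set.indicator_of_notMem hn (fun _ => (1 : ℝ))).symm
  have hlim : ∫ w, Set.indicator (KS ω y) (fun _ => (1 : ℝ)) w = (volume (KS ω y)).toReal :=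
    MeasureTheory.integral_indicator_one (KS_open ω y).measurableSet
  rw [← hlim]
  refine Tendsto.congr' ?_ hmain
  filter_upwards [eventually_gt_atTop 0] with n hn
  exact integral_UB ω (p n) n hn

lemma ratio_arith {r b : ℕ} (hrb : r ≤ b) (N P nn : ℝ) (hn : nn ≠ 0) (hP : P ≠ 0) :
    N / (P ^ (r + 1) * nn ^ (b - r)) = (N * (1 / nn) ^ (b + 1)) * (nn / P) ^ (r + 1) := by
  have hb1 : nn ^ (b + 1) = nn ^ (b - r) * nn ^ (r + 1) := by
    rw [← pow_add]
    congr 1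
    omega
  rw [div_pow, div_pow, one_pow, hb1]
  field_simp

end Statement15Assembly
/-- For the symmetric Hankel link `L(i,j) = i+j` and
`p(n)/n → y ∈ (0,∞)`, the limit of `|Π(ω)|/(p^{r+1}·n^{b−r})` exists for every
partition `ω` with `b` blocks and `r(ω) = r`; it is strictly positive iff `ω` is symmetric,
and is `0` when `ω` is not symmetric. -/
theorem statement15 (k b r : ℕ) (hk : 1 ≤ k)
    (ω : Finpartition (Finset.Icc 1 (2 * k)))
    (hωb : ω.parts.card = b) (hωr : rIdx ω = r)
    (p : ℕ → ℕ) (y : ℝ) (hy : 0 < y)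
    (hp : Tendsto (fun n : ℕ => (p n : ℝ) / n) atTop (𝓝 y)) :
    ∃ c : ℝ,
      Tendsto (fun n : ℕ =>
          ((PiL (fun i j => i + j) (p n) n k ω).ncard : ℝ) /
            ((p n : ℝ) ^ (r + 1) * (n : ℝ) ^ (b - r)))
        atTop (𝓝 c) ∧
      (0 < c ↔ SymmetricPartition ω) ∧ (¬ SymmetricPartition ω → c = 0) := by
  subst hωb hωr
  have hrb : rIdx ω ≤ ω.parts.card := Finset.card_filter_le _ _
  have hpe : ∀ᶠ n : ℕ in atTop, (0 : ℝ) < p n ∧ (y / 2) * n ≤ (p n : ℝ) := by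
    filter_upwards [hp.eventually_const_lt (by linarith : y / 2 < y),
      eventually_gt_atTop 0] with n h1 h2
    have hn' : (0 : ℝ) < n := by exact_mod_cast h2
    rw [lt_div_iff₀ hn'] at h1
    constructor
    · nlinarith
    · nlinarith
  by_cases hsym : SymmetricPartition ω
  · -- symmetric case: positive limit
    have hcpos : 0 < (volume (KS ω y)).toReal * (1 / y) ^ (rIdx ω + 1) := by
      refine mul_pos ?_ (pow_pos (by positivity) _)
      exact ENNReal.toReal_pos (volume_KS_pos ω hy).ne' (volume_KS_ne_top ω hy)
    refine ⟨(volume (KS ω y)).toReal * (1 / y) ^ (rIdx ω + 1), ?_,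
      ⟨fun _ => hsym, fun _ => hcpos⟩, fun h => absurd hsym h⟩
    have hcongr : ∀ᶠ n : ℕ in atTop,
        ((SZ ω (p n) n).ncard : ℝ) * (1 / (n : ℝ)) ^ Fintype.card (Idx ω)
            * ((n : ℝ) / (p n)) ^ (rIdx ω + 1)
          = ((PiL (fun i j => i + j) (p n) n k ω).ncard : ℝ) /
            ((p n : ℝ) ^ (rIdx ω + 1) * (n : ℝ) ^ (ω.parts.card - rIdx ω)) := by
      filter_upwards [hpe, eventually_gt_atTop 0] with n h1 h2
      rw [ncard_PiL_eq ω (p n) n]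
      have hcard : Fintype.card (Idx ω) = ω.parts.card + 1 := by
        rw [Fintype.card_option, Fintype.card_coe]
      rw [hcard]
      have hn0 : ((n : ℝ)) ≠ 0 := by
        have : (0 : ℝ) < n := by exact_mod_cast h2
        exact this.ne'
      exact (ratio_arith hrb _ _ _ hn0 h1.1.ne').symm
    refine Tendsto.congr' hcongr ?_
    have h2 := tendsto_integral_UB ω hsym hy hp
    have h3 : Tendsto (fun n : ℕ => ((n : ℝ) / (p n)) ^ (rIdx ω + 1)) atTop
        (𝓝 ((1 / y) ^ (rIdx ω + 1))) := by
      refine Tendsto.pow ?_ _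
      rw [one_div]
      exact Tendsto.congr (fun n => inv_div (p n : ℝ) (n : ℝ)) (hp.inv₀ hy.ne')
    exact h2.mul h3
  · -- non-symmetric case: limit 0
    refine ⟨0, ?_, ⟨fun h0 => absurd h0 (lt_irrefl (0 : ℝ)), fun hs => absurd hs hsym⟩,
      fun _ => rfl⟩
    set C : ℝ := (2 * y + 5) ^ ω.parts.card / (y / 2) ^ (rIdx ω + 1) with hC
    refine squeeze_zero' ?_ ?_ (tendsto_const_div_atTop_nhds_zero_nat C)
    · refine Filter.Eventually.of_forall fun n => ?_
      positivity
    · have hev2 : ∀ᶠ n : ℕ in atTop, (p n : ℝ) ≤ (y + 1) * n := by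
        filter_upwards [hp.eventually_lt_const (by linarith : y < y + 1),
          eventually_gt_atTop 0] with n h1 h2
        have hn' : (0 : ℝ) < n := by exact_mod_cast h2
        rw [div_lt_iff₀ hn'] at h1
        linarith
      filter_upwards [hpe, hev2, eventually_gt_atTop 0] with n h1 h2 h3
      have hn' : (0 : ℝ) < n := by exact_mod_cast h3
      have hn1 : (1 : ℝ) ≤ n := by exact_mod_cast h3
      have hnum : ((PiL (fun i j => i + j) (p n) n k ω).ncard : ℝ)
          ≤ (2 * y + 5) ^ ω.parts.card * (n : ℝ) ^ ω.parts.card := by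
        rw [ncard_PiL_eq ω (p n) n]
        have hle := ncard_SZ_le_nonsym ω hsym (p n) n
        have hle' : ((SZ ω (p n) n).ncard : ℝ) ≤ ((2 * (p n + n) + 1 : ℕ) : ℝ) ^ ω.parts.card := by
          exact_mod_cast hle
        refine le_trans hle' ?_
        rw [← mul_pow]
        refine pow_le_pow_left₀ (by positivity) ?_ _
        push_cast
        nlinarith [h2, hn1]
      have hden : (y / 2) ^ (rIdx ω + 1) * (n : ℝ) ^ (ω.parts.card + 1)
          ≤ (p n : ℝ) ^ (rIdx ω + 1) * (n : ℝ) ^ (ω.parts.card - rIdx ω) := by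
        have hsplit : (n : ℝ) ^ (ω.parts.card + 1)
            = (n : ℝ) ^ (rIdx ω + 1) * (n : ℝ) ^ (ω.parts.card - rIdx ω) := by
          rw [← pow_add]
          congr 1
          omega
        rw [hsplit, ← mul_assoc]
        refine mul_le_mul_of_nonneg_right ?_ (by positivity)
        rw [← mul_pow]
        refine pow_le_pow_left₀ (by positivity) ?_ _
        linarith [h1.2]
      have hd0 : (0 : ℝ) < (y / 2) ^ (rIdx ω + 1) * (n : ℝ) ^ (ω.parts.card + 1) := by
        positivity
      refine le_trans (div_le_div₀ (by positivity) hnum hd0 hden) (le_of_eq ?_)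
      have hy2 : ((y / 2) ^ (rIdx ω + 1)) ≠ 0 := by positivity
      rw [pow_succ, hC]
      field_simp
      ring

end RMT
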